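/- arXiv:1206.5860 — 2 statements merged into one kernel-verified Lean document; each statement's English description precedes it below -/
import Mathlib

section
/- Let D > 0 and let S ⊂ ℝ be a finite set. Let n : ℝ × (0,∞) → ℝ be continuous, suppose the partial derivative ∂n/∂x exists and is continuous on all of ℝ × (0,∞), and suppose that on (ℝ ∖ S) × (0,∞) the function n is once continuously differentiable in t, twice continuously differentiable in x, and satisfies the heat equation ∂n/∂t = D ∂²n/∂x². Then n is a weak (distributional) solution of the heat equation on ℝ × (0,∞): for every smooth compactly supported test function φ : ℝ × (0,∞) → ℝ one has ∫∫ n(x,t) (∂φ/∂t(x,t) + D ∂²φ/∂x²(x,t)) dx dt = 0. -/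
open MeasureTheory Set Filter Topology

lemma cont_glue1 {f : ℝ → ℝ} {ε : ℝ} (hε : 0 < ε)
    (hc : ContinuousOn f (Ioi 0)) (h0 : ∀ t < ε, f t = 0) : Continuous f := by
  rw [continuous_iff_continuousAt]
  intro t
  rcases lt_or_ge t ε with hlt | hle
  · have hev : f =ᶠ[𝓝 t] fun _ => 0 := by
      filter_upwards [Iio_mem_nhds hlt] with s hs using h0 s hs
    exact continuousAt_const.congr hev.symm
  · exact (hc t (hε.trans_le hle)).continuousAt (Ioi_mem_nhds (hε.trans_le hle))

lemma cont_glue2 {f : ℝ × ℝ → ℝ} {ε : ℝ} (hε : 0 < ε)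
    (hc : ContinuousOn f (univ ×ˢ Ioi 0)) (h0 : ∀ q : ℝ × ℝ, q.2 < ε → f q = 0) :
    Continuous f := by
  rw [continuous_iff_continuousAt]
  intro q
  rcases lt_or_ge q.2 ε with hlt | hle
  · have hev : f =ᶠ[𝓝 q] fun _ => 0 := by
      have ho : IsOpen {p : ℝ × ℝ | p.2 < ε} := isOpen_lt continuous_snd continuous_const
      filter_upwards [ho.mem_nhds hlt] with p hp using h0 p hp
    exact continuousAt_const.congr hev.symm
  · exact (hc q ⟨mem_univ _, hε.trans_le hle⟩).continuousAt
      ((isOpen_univ.prod isOpen_Ioi).mem_nhds ⟨mem_univ _, hε.trans_le hle⟩)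

lemma hasDerivAt_comp_fst {φ : ℝ × ℝ → ℝ} (hφ : ContDiff ℝ (⊤ : ℕ∞) φ) (x t : ℝ) :
    HasDerivAt (fun y => φ (y, t)) (fderiv ℝ φ (x, t) (1, 0)) x := by
  have h1 : HasDerivAt (fun y : ℝ => (y, t)) ((1 : ℝ), (0 : ℝ)) x :=
    (hasDerivAt_id x).prodMk (hasDerivAt_const x t)
  have h2 := ((hφ.differentiable (by simp) (x, t)).hasFDerivAt.comp_hasDerivAt x h1)
  exact h2

lemma hasDerivAt_comp_snd {φ : ℝ × ℝ → ℝ} (hφ : ContDiff ℝ (⊤ : ℕ∞) φ) (x t : ℝ) :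
    HasDerivAt (fun τ => φ (x, τ)) (fderiv ℝ φ (x, t) (0, 1)) t := by
  have h1 : HasDerivAt (fun τ : ℝ => (x, τ)) ((0 : ℝ), (1 : ℝ)) t :=
    (hasDerivAt_const t x).prodMk (hasDerivAt_id t)
  have h2 := ((hφ.differentiable (by simp) (x, t)).hasFDerivAt.comp_hasDerivAt t h1)
  exact h2

lemma contdiff_px {φ : ℝ × ℝ → ℝ} (hφ : ContDiff ℝ (⊤ : ℕ∞) φ) (v : ℝ × ℝ) :
    ContDiff ℝ (⊤ : ℕ∞) (fun q => fderiv ℝ φ q v) :=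
  (hφ.fderiv_right (by simp)).clm_apply contDiff_const

/-- The regularity/gluing step in the proof of Theorem 2: a continuous
function `n` on `ℝ × (0,∞)` whose spatial derivative exists and is continuous everywhere,
and which is C¹ in time, C² in space, and satisfies the heat equation `∂n/∂t = D ∂²n/∂x²`
away from a finite set `S` of spatial points, is a weak (distributional) solution of the
heat equation on all of `ℝ × (0,∞)`. -/
theorem glued_solution_is_weak_solution
    (D : ℝ) (hD : 0 < D) (S : Set ℝ) (hS : S.Finite)
    (n nt nx nxx : ℝ → ℝ → ℝ)
    -- `n` is continuous on `ℝ × (0,∞)`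
    (hncont : ContinuousOn (fun q : ℝ × ℝ => n q.1 q.2) (univ ×ˢ Ioi 0))
    -- the spatial derivative `∂n/∂x` exists and is continuous on all of `ℝ × (0,∞)`
    (hnx : ∀ x : ℝ, ∀ t, 0 < t → HasDerivAt (fun y => n y t) (nx x t) x)
    (hnxc : ContinuousOn (fun q : ℝ × ℝ => nx q.1 q.2) (univ ×ˢ Ioi 0))
    -- away from `S`, `n` is C¹ in `t` and C² in `x`
    (hnt : ∀ x ∉ S, ∀ t, 0 < t → HasDerivAt (fun τ => n x τ) (nt x t) t)
    (hnxx : ∀ x ∉ S, ∀ t, 0 < t → HasDerivAt (fun y => nx y t) (nxx x t) x)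
    (hntc : ContinuousOn (fun q : ℝ × ℝ => nt q.1 q.2) (Sᶜ ×ˢ Ioi 0))
    (hnxxc : ContinuousOn (fun q : ℝ × ℝ => nxx q.1 q.2) (Sᶜ ×ˢ Ioi 0))
    -- heat equation away from `S`
    (hheat : ∀ x ∉ S, ∀ t, 0 < t → nt x t = D * nxx x t) :
    -- conclusion: `n` is a weak solution of the heat equation on `ℝ × (0,∞)`
    ∀ φ : ℝ × ℝ → ℝ, ContDiff ℝ (⊤ : ℕ∞) φ → HasCompactSupport φ →
      tsupport φ ⊆ univ ×ˢ Ioi 0 →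
      ∫ q : ℝ × ℝ, n q.1 q.2 *
        (deriv (fun τ => φ (q.1, τ)) q.2 + D * deriv (deriv (fun y => φ (y, q.2))) q.1) = 0 := by
  intro φ hφ hφc hφsupp
  classical
  set K := tsupport φ with hKdef
  have hKc : IsCompact K := hφc
  have hKclosed : IsClosed K := isClosed_tsupport φ
  -- partial derivative functions of φ
  set Pt : ℝ × ℝ → ℝ := fun q => fderiv ℝ φ q (0, 1) with hPtdef
  set Px : ℝ × ℝ → ℝ := fun q => fderiv ℝ φ q (1, 0) with hPxdef
  have hPxsm : ContDiff ℝ (⊤ : ℕ∞) Px := contdiff_px hφ _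
  set Pxx : ℝ × ℝ → ℝ := fun q => fderiv ℝ Px q (1, 0) with hPxxdef
  have contPt : Continuous Pt :=
    ((hφ.continuous_fderiv (by simp)).clm_apply continuous_const)
  have contPx : Continuous Px :=
    ((hφ.continuous_fderiv (by simp)).clm_apply continuous_const)
  have contPxx : Continuous Pxx :=
    ((hPxsm.continuous_fderiv (by simp)).clm_apply continuous_const)
  -- vanishing outside K
  have hφ0 : ∀ q ∉ K, φ q = 0 := fun q hq => image_eq_zero_of_notMem_tsupport hq
  have hPt0 : ∀ q ∉ K, Pt q = 0 := by
    intro q hq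
    have : fderiv ℝ φ q = 0 := by
      by_contra h
      exact hq (support_fderiv_subset ℝ (Function.mem_support.2 h))
    simp [hPtdef, this]
  have hPx0 : ∀ q ∉ K, Px q = 0 := by
    intro q hq
    have : fderiv ℝ φ q = 0 := by
      by_contra h
      exact hq (support_fderiv_subset ℝ (Function.mem_support.2 h))
    simp [hPxdef, this]
  have hPxx0 : ∀ q ∉ K, Pxx q = 0 := by
    intro q hq
    have hsub : tsupport Px ⊆ K := closure_minimal (fun p hp => by
      by_contra hpK
      exact hp (by simp [hPx0 p hpK])) hKclosed
    have : fderiv ℝ Px q = 0 := by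
      by_contra h
      exact hq (hsub (support_fderiv_subset ℝ (Function.mem_support.2 h)))
    simp [hPxxdef, this]
  -- bounding rectangle
  obtain ⟨ε, hε, M, c, d, hεM, hcd, hKsub⟩ :
      ∃ ε > 0, ∃ M c d : ℝ, ε ≤ M ∧ c ≤ d ∧ K ⊆ Icc c d ×ˢ Icc ε M := by
    rcases K.eq_empty_or_nonempty with h | h
    · exact ⟨1, one_pos, 1, 0, 1, le_refl _, zero_le_one, by simp [h]⟩
    · obtain ⟨q₁, hq₁K, hq₁⟩ := hKc.exists_isMinOn h continuous_snd.continuousOn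
      obtain ⟨q₂, hq₂K, hq₂⟩ := hKc.exists_isMaxOn h continuous_snd.continuousOn
      obtain ⟨q₃, hq₃K, hq₃⟩ := hKc.exists_isMinOn h continuous_fst.continuousOn
      obtain ⟨q₄, hq₄K, hq₄⟩ := hKc.exists_isMaxOn h continuous_fst.continuousOn
      exact ⟨q₁.2, (hφsupp hq₁K).2, q₂.2, q₃.1, q₄.1, hq₂ hq₁K, hq₄ hq₃K,
        fun q hq => ⟨⟨hq₃ hq, hq₄ hq⟩, ⟨hq₁ hq, hq₂ hq⟩⟩⟩
  have hMpos : 0 < M := lt_of_lt_of_le hε hεM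
  -- membership helpers
  have hnotK : ∀ (x t : ℝ), x ∉ Icc c d ∨ t ∉ Icc ε M → (x, t) ∉ K := by
    intro x t h hK
    rcases hKsub hK with ⟨h1, h2⟩
    rcases h with h | h
    · exact h h1
    · exact h h2
  have hnotKt : ∀ (x t : ℝ), t < ε → (x, t) ∉ K := fun x t ht =>
    hnotK x t (Or.inr fun hmem => absurd hmem.1 (not_le.2 ht))
  -- slice continuity
  have hsl_n_t : ∀ x : ℝ, ContinuousOn (fun t => n x t) (Ioi 0) := fun x =>
    hncont.comp (Continuous.prodMk_right x).continuousOn (fun t ht => ⟨mem_univ _, ht⟩)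
  have hsl_nx_t : ∀ x : ℝ, ContinuousOn (fun t => nx x t) (Ioi 0) := fun x =>
    hnxc.comp (Continuous.prodMk_right x).continuousOn (fun t ht => ⟨mem_univ _, ht⟩)
  have hsl_nt_t : ∀ x ∉ S, ContinuousOn (fun t => nt x t) (Ioi 0) := fun x hx =>
    hntc.comp (Continuous.prodMk_right x).continuousOn (fun t ht => ⟨hx, ht⟩)
  have hsl_nxx_t : ∀ x ∉ S, ContinuousOn (fun t => nxx x t) (Ioi 0) := fun x hx =>
    hnxxc.comp (Continuous.prodMk_right x).continuousOn (fun t ht => ⟨hx, ht⟩)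
  have hsl_n_x : ∀ t : ℝ, 0 < t → Continuous (fun x => n x t) := fun t ht =>
    hncont.comp_continuous (continuous_id.prodMk continuous_const)
      (fun x => ⟨mem_univ _, ht⟩)
  have hsl_nx_x : ∀ t : ℝ, 0 < t → Continuous (fun x => nx x t) := fun t ht =>
    hnxc.comp_continuous (continuous_id.prodMk continuous_const)
      (fun x => ⟨mem_univ _, ht⟩)
  -- the four integrands
  set F1 : ℝ × ℝ → ℝ := fun q => n q.1 q.2 * Pt q with hF1def
  set F2 : ℝ × ℝ → ℝ := fun q => n q.1 q.2 * Pxx q with hF2def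
  set G2 : ℝ × ℝ → ℝ := fun q => nx q.1 q.2 * Px q with hG2def
  set G3 : ℝ × ℝ → ℝ := fun q => nxx q.1 q.2 * φ q with hG3def
  set Gφ : ℝ × ℝ → ℝ := fun q => nx q.1 q.2 * φ q with hGφdef
  have contF1 : Continuous F1 :=
    cont_glue2 hε (hncont.mul contPt.continuousOn)
      (fun q hq => by simp [hF1def, hPt0 q (hnotKt q.1 q.2 hq)])
  have contF2 : Continuous F2 :=
    cont_glue2 hε (hncont.mul contPxx.continuousOn)
      (fun q hq => by simp [hF2def, hPxx0 q (hnotKt q.1 q.2 hq)])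
  have contG2 : Continuous G2 :=
    cont_glue2 hε (hnxc.mul contPx.continuousOn)
      (fun q hq => by simp [hG2def, hPx0 q (hnotKt q.1 q.2 hq)])
  have contGφ : Continuous Gφ :=
    cont_glue2 hε (hnxc.mul hφ.continuous.continuousOn)
      (fun q hq => by simp [hGφdef, hφ0 q (hnotKt q.1 q.2 hq)])
  have intF1 : Integrable F1 := contF1.integrable_of_hasCompactSupport
    (HasCompactSupport.intro hKc (fun q hq => by simp [hF1def, hPt0 q hq]))
  have intF2 : Integrable F2 := contF2.integrable_of_hasCompactSupport
    (HasCompactSupport.intro hKc (fun q hq => by simp [hF2def, hPxx0 q hq]))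
  have intG2 : Integrable G2 := contG2.integrable_of_hasCompactSupport
    (HasCompactSupport.intro hKc (fun q hq => by simp [hG2def, hPx0 q hq]))
  have ht1 : (0 : ℝ) < ε / 2 := by linarith
  have ht12 : ε / 2 ≤ M + 1 := by linarith
  have hab : c - 1 ≤ d + 1 := by linarith
  -- Step T : time integration by parts for x ∉ S
  have stepT : ∀ x ∉ S, (∫ t, F1 (x, t)) = -(D * ∫ t, G3 (x, t)) := by
    intro x hx
    have hu : ∀ t ∈ uIcc (ε / 2) (M + 1), HasDerivAt (fun τ => n x τ * φ (x, τ))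
        (nt x t * φ (x, t) + n x t * Pt (x, t)) t := by
      intro t ht
      rw [uIcc_of_le ht12] at ht
      exact (hnt x hx t (lt_of_lt_of_le ht1 ht.1)).mul (hasDerivAt_comp_snd hφ x t)
    have hw1 : ContinuousOn (fun t => nt x t * φ (x, t)) (uIcc (ε / 2) (M + 1)) := by
      rw [uIcc_of_le ht12]
      exact ((hsl_nt_t x hx).mono (fun t ht => lt_of_lt_of_le ht1 ht.1)).mul
        ((hφ.continuous.comp (Continuous.prodMk_right x)).continuousOn)
    have hw2 : ContinuousOn (fun t => n x t * Pt (x, t)) (uIcc (ε / 2) (M + 1)) := by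
      rw [uIcc_of_le ht12]
      exact ((hsl_n_t x).mono (fun t ht => lt_of_lt_of_le ht1 ht.1)).mul
        ((contPt.comp (Continuous.prodMk_right x)).continuousOn)
    have hFTC := intervalIntegral.integral_eq_sub_of_hasDerivAt hu
      ((hw1.add hw2).intervalIntegrable)
    have hend1 : φ (x, M + 1) = 0 := hφ0 _ (hnotK x (M + 1)
      (Or.inr (fun hmem => by linarith [hmem.2])))
    have hend2 : φ (x, ε / 2) = 0 := hφ0 _ (hnotKt x (ε / 2) (by linarith))
    rw [hend1, hend2, mul_zero, mul_zero, sub_zero] at hFTC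
    rw [intervalIntegral.integral_add (hw1.intervalIntegrable) (hw2.intervalIntegrable)]
      at hFTC
    -- identify the two pieces
    have e2 : ∫ t in (ε/2)..(M+1), n x t * Pt (x, t) = ∫ t, F1 (x, t) := by
      apply intervalIntegral.integral_eq_integral_of_support_subset
      intro t ht
      have hK' : (x, t) ∈ K := by
        by_contra hK'
        exact ht (by simp [hPt0 _ hK'])
      rcases (hKsub hK').2 with ⟨h1, h2⟩
      exact ⟨by linarith, by linarith⟩
    have e3 : ∀ t, nt x t * φ (x, t) = D * G3 (x, t) := by
      intro t
      rcases lt_or_ge 0 t with htp | htp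
      · rw [hheat x hx t htp, hG3def]; ring
      · have : φ (x, t) = 0 := hφ0 _ (hnotKt x t (by linarith))
        simp [hG3def, this]
    have e4 : ∫ t in (ε/2)..(M+1), nt x t * φ (x, t)
        = D * ∫ t, G3 (x, t) := by
      rw [show (fun t => nt x t * φ (x, t)) = fun t => D * G3 (x, t) from funext e3]
      rw [intervalIntegral.integral_const_mul]
      congr 1
      apply intervalIntegral.integral_eq_integral_of_support_subset
      intro t ht
      have hK' : (x, t) ∈ K := by
        by_contra hK'
        exact ht (by simp [hG3def, hφ0 _ hK'])
      rcases (hKsub hK').2 with ⟨h1, h2⟩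
      exact ⟨by linarith, by linarith⟩
    rw [e4, e2] at hFTC
    linarith
  -- Step X : spatial integration by parts for each t
  have stepX : ∀ t : ℝ, (∫ x, F2 (x, t)) = -(∫ x, G2 (x, t)) := by
    intro t
    rcases lt_or_ge 0 t with htp | htp
    · have hu : ∀ x ∈ uIcc (c - 1) (d + 1), HasDerivAt (fun y => n y t * Px (y, t))
          (nx x t * Px (x, t) + n x t * Pxx (x, t)) x := by
        intro x _
        exact (hnx x t htp).mul (hasDerivAt_comp_fst hPxsm x t)
      have hw1 : ContinuousOn (fun x => nx x t * Px (x, t)) (uIcc (c - 1) (d + 1)) :=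
        ((hsl_nx_x t htp).mul
          (contPx.comp (continuous_id.prodMk continuous_const))).continuousOn
      have hw2 : ContinuousOn (fun x => n x t * Pxx (x, t)) (uIcc (c - 1) (d + 1)) :=
        ((hsl_n_x t htp).mul
          (contPxx.comp (continuous_id.prodMk continuous_const))).continuousOn
      have hFTC := intervalIntegral.integral_eq_sub_of_hasDerivAt hu
        ((hw1.add hw2).intervalIntegrable)
      have hend1 : Px (d + 1, t) = 0 := hPx0 _ (hnotK (d + 1) t
        (Or.inl (fun hmem => by linarith [hmem.2])))
      have hend2 : Px (c - 1, t) = 0 := hPx0 _ (hnotK (c - 1) t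
        (Or.inl (fun hmem => by linarith [hmem.1])))
      rw [hend1, hend2, mul_zero, mul_zero, sub_zero] at hFTC
      rw [intervalIntegral.integral_add (hw1.intervalIntegrable) (hw2.intervalIntegrable)]
        at hFTC
      have e2 : ∫ x in (c-1)..(d+1), n x t * Pxx (x, t) = ∫ x, F2 (x, t) := by
        apply intervalIntegral.integral_eq_integral_of_support_subset
        intro x hxs
        have hK' : (x, t) ∈ K := by
          by_contra hK'
          exact hxs (by simp [hPxx0 _ hK'])
        rcases (hKsub hK').1 with ⟨h1, h2⟩
        exact ⟨by linarith, by linarith⟩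
      have e3 : ∫ x in (c-1)..(d+1), nx x t * Px (x, t) = ∫ x, G2 (x, t) := by
        apply intervalIntegral.integral_eq_integral_of_support_subset
        intro x hxs
        have hK' : (x, t) ∈ K := by
          by_contra hK'
          exact hxs (by simp [hPx0 _ hK'])
        rcases (hKsub hK').1 with ⟨h1, h2⟩
        exact ⟨by linarith, by linarith⟩
      rw [e2, e3] at hFTC
      linarith
    · have h1 : ∀ x : ℝ, F2 (x, t) = 0 := fun x => by
        simp [hF2def, hPxx0 _ (hnotKt x t (by linarith))]
      have h2 : ∀ x : ℝ, G2 (x, t) = 0 := fun x => by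
        simp [hG2def, hPx0 _ (hnotKt x t (by linarith))]
      simp [funext h1, funext h2]
  -- slice integrability in t
  have intGφx : ∀ x : ℝ, Integrable (fun t => Gφ (x, t)) := fun x =>
    (contGφ.comp (Continuous.prodMk_right x)).integrable_of_hasCompactSupport
      (HasCompactSupport.intro (isCompact_Icc (a := ε) (b := M)) (fun t ht => by
        simp [hGφdef, hφ0 (x, t) (hnotK x t (Or.inr ht))]))
  have intG2x : ∀ x : ℝ, Integrable (fun t => G2 (x, t)) := fun x =>
    (contG2.comp (Continuous.prodMk_right x)).integrable_of_hasCompactSupport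
      (HasCompactSupport.intro (isCompact_Icc (a := ε) (b := M)) (fun t ht => by
        simp [hG2def, hPx0 (x, t) (hnotK x t (Or.inr ht))]))
  have contG3x : ∀ x ∉ S, Continuous (fun t => G3 (x, t)) := by
    intro x hx
    apply cont_glue1 hε
    · exact (hsl_nxx_t x hx).mul (hφ.continuous.comp (Continuous.prodMk_right x)).continuousOn
    · intro t ht
      simp [hG3def, hφ0 (x, t) (hnotKt x t ht)]
  have intG3x : ∀ x ∉ S, Integrable (fun t => G3 (x, t)) := fun x hx =>
    (contG3x x hx).integrable_of_hasCompactSupport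
      (HasCompactSupport.intro (isCompact_Icc (a := ε) (b := M)) (fun t ht => by
        simp [hG3def, hφ0 (x, t) (hnotK x t (Or.inr ht))]))
  -- the function H
  have measIccMF : (volume (Icc ε M)) < ⊤ := measure_Icc_lt_top
  have contH : Continuous (fun x => ∫ t, Gφ (x, t)) := by
    obtain ⟨C, hC⟩ := (isCompact_Icc.prod isCompact_Icc :
        IsCompact (Icc c d ×ˢ Icc ε M)).exists_bound_of_continuousOn contGφ.continuousOn
    apply continuous_of_dominated (bound := (Icc ε M).indicator (fun _ => max C 0))
    · exact fun x => (contGφ.comp (Continuous.prodMk_right x)).aestronglyMeasurable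
    · intro x
      refine Eventually.of_forall (fun t => ?_)
      by_cases ht : t ∈ Icc ε M
      · rw [indicator_of_mem ht]
        by_cases hx : x ∈ Icc c d
        · exact (hC (x, t) ⟨hx, ht⟩).trans (le_max_left _ _)
        · have : Gφ (x, t) = 0 := by
            simp [hGφdef, hφ0 (x, t) (hnotK x t (Or.inl hx))]
          simp [this, le_max_iff]
      · rw [indicator_of_notMem ht]
        have : Gφ (x, t) = 0 := by
          simp [hGφdef, hφ0 (x, t) (hnotK x t (Or.inr ht))]
        simp [this]
    · exact (integrable_indicator_iff measurableSet_Icc).2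
        (integrableOn_const measIccMF.ne)
    · exact Eventually.of_forall (fun t =>
        contGφ.comp (continuous_id.prodMk continuous_const))
  -- derivative of H off S
  have hasDerivH : ∀ x₀ ∉ S, HasDerivAt (fun x => ∫ t, Gφ (x, t))
      ((∫ t, G3 (x₀, t)) + (∫ t, G2 (x₀, t))) x₀ := by
    intro x₀ hx₀
    obtain ⟨r, hr, hball⟩ := Metric.isOpen_iff.1 hS.isClosed.isOpen_compl x₀ hx₀
    set δ := r / 2 with hδdef
    have hδ : 0 < δ := by positivity
    have hcball : Metric.closedBall x₀ δ ⊆ Sᶜ :=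
      (Metric.closedBall_subset_ball (by rw [hδdef]; linarith)).trans hball
    have hQsub : Metric.closedBall x₀ δ ×ˢ Icc ε M ⊆ Sᶜ ×ˢ Ioi 0 :=
      prod_mono hcball (fun t ht => lt_of_lt_of_le hε ht.1)
    have hF'cont : ContinuousOn (fun q : ℝ × ℝ => G3 q + G2 q) (Sᶜ ×ˢ Ioi 0) := by
      apply ContinuousOn.add
      · exact (hnxxc.mul hφ.continuous.continuousOn).congr (fun q _ => by simp [hG3def])
      · exact contG2.continuousOn
    obtain ⟨C, hC⟩ := ((isCompact_closedBall x₀ δ).prod isCompact_Icc).exists_bound_of_continuousOn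
      (hF'cont.mono hQsub)
    have key := hasDerivAt_integral_of_dominated_loc_of_deriv_le (μ := volume)
      (F := fun x t => Gφ (x, t)) (F' := fun x t => G3 (x, t) + G2 (x, t))
      (x₀ := x₀) (s := Metric.ball x₀ δ) (bound := (Icc ε M).indicator (fun _ => max C 0)) (Metric.ball_mem_nhds x₀ hδ)
      (Eventually.of_forall (fun x => (contGφ.comp (Continuous.prodMk_right x)).aestronglyMeasurable))
      (intGφx x₀)
      (((contG3x x₀ hx₀).add (contG2.comp (Continuous.prodMk_right x₀))).aestronglyMeasurable)
      ?_ ((integrable_indicator_iff measurableSet_Icc).2 (integrableOn_const measIccMF.ne))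
      ?_
    · have := key.2
      rwa [integral_add (intG3x x₀ hx₀) (intG2x x₀)] at this
    · refine Eventually.of_forall (fun t => fun x hx => ?_)
      by_cases ht : t ∈ Icc ε M
      · rw [indicator_of_mem ht]
        exact (hC (x, t) ⟨Metric.ball_subset_closedBall hx, ht⟩).trans (le_max_left _ _)
      · rw [indicator_of_notMem ht]
        have h1 : G3 (x, t) = 0 := by
          simp [hG3def, hφ0 (x, t) (hnotK x t (Or.inr ht))]
        have h2 : G2 (x, t) = 0 := by
          simp [hG2def, hPx0 (x, t) (hnotK x t (Or.inr ht))]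
        simp [h1, h2]
    · refine Eventually.of_forall (fun t => fun x hx => ?_)
      have hxS : x ∉ S := hcball (Metric.ball_subset_closedBall hx)
      rcases lt_or_ge 0 t with htp | htp
      · have h := (hnxx x hxS t htp).mul (hasDerivAt_comp_fst hφ x t)
        simp only [hGφdef, hG3def, hG2def, hPxdef]
        exact h
      · have hφt : ∀ y : ℝ, φ (y, t) = 0 := fun y => hφ0 _ (hnotKt y t (by linarith))
        have h1 : G3 (x, t) = 0 := by simp [hG3def, hφt x]
        have h2 : G2 (x, t) = 0 := by
          simp [hG2def, hPx0 (x, t) (hnotKt x t (by linarith))]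
        have h3 : (fun y => Gφ (y, t)) = fun _ => (0 : ℝ) := funext fun y => by
          simp [hGφdef, hφt y]
        show HasDerivAt (fun y => Gφ (y, t)) (G3 (x, t) + G2 (x, t)) x
        rw [h1, h2, h3]
        simpa using hasDerivAt_const x (0 : ℝ)
  -- Fubini plumbing
  have hae : ∀ᵐ x : ℝ, x ∉ S := hS.countable.ae_notMem volume
  have hvol : (volume : Measure (ℝ × ℝ)) = (volume : Measure ℝ).prod volume :=
    Measure.volume_eq_prod ℝ ℝ
  have intF1' : Integrable F1 ((volume : Measure ℝ).prod volume) := hvol ▸ intF1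
  have intF2' : Integrable F2 ((volume : Measure ℝ).prod volume) := hvol ▸ intF2
  have intG2' : Integrable G2 ((volume : Measure ℝ).prod volume) := hvol ▸ intG2
  have intB : Integrable (fun x => ∫ t, G2 (x, t)) := intG2'.integral_prod_left
  have intA'fun : Integrable (fun x => ∫ t, F1 (x, t)) := intF1'.integral_prod_left
  have intA : Integrable (fun x => ∫ t, G3 (x, t)) := by
    apply (intA'fun.const_mul (-(1/D))).congr
    filter_upwards [hae] with x hx
    rw [stepT x hx]
    field_simp
  -- FTC in x with countable exceptional set
  have hHb : (∫ t, Gφ (d + 1, t)) = 0 := by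
    have h : (fun t => Gφ (d + 1, t)) = fun _ => (0 : ℝ) := funext fun t => by
      simp [hGφdef, hφ0 (d + 1, t) (hnotK (d + 1) t (Or.inl (fun hm => by linarith [hm.2])))]
    rw [h]; simp
  have hHa : (∫ t, Gφ (c - 1, t)) = 0 := by
    have h : (fun t => Gφ (c - 1, t)) = fun _ => (0 : ℝ) := funext fun t => by
      simp [hGφdef, hφ0 (c - 1, t) (hnotK (c - 1) t (Or.inl (fun hm => by linarith [hm.1])))]
    rw [h]; simp
  have hFTC2 : (∫ x in (c - 1)..(d + 1), ((∫ t, G3 (x, t)) + (∫ t, G2 (x, t)))) = 0 := by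
    rw [integral_eq_of_hasDerivAt_off_countable_of_le (fun x => ∫ t, Gφ (x, t))
      (fun x => (∫ t, G3 (x, t)) + (∫ t, G2 (x, t))) hab hS.countable contH.continuousOn
      (fun x hx => hasDerivH x hx.2) ((intA.add intB).intervalIntegrable)]
    rw [hHa, hHb, sub_zero]
  have hzero_out : ∀ x ∉ Icc c d, ((∫ t, G3 (x, t)) + (∫ t, G2 (x, t))) = 0 := by
    intro x hx
    have h1 : (fun t => G3 (x, t)) = fun _ => (0 : ℝ) := funext fun t => by
      simp [hG3def, hφ0 (x, t) (hnotK x t (Or.inl hx))]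
    have h2 : (fun t => G2 (x, t)) = fun _ => (0 : ℝ) := funext fun t => by
      simp [hG2def, hPx0 (x, t) (hnotK x t (Or.inl hx))]
    rw [h1, h2]; simp
  have hfull : (∫ x, ((∫ t, G3 (x, t)) + (∫ t, G2 (x, t)))) = 0 := by
    have hsupp : Function.support (fun x => (∫ t, G3 (x, t)) + (∫ t, G2 (x, t)))
        ⊆ Ioc (c - 1) (d + 1) := by
      intro x hxs
      have hx : x ∈ Icc c d := by
        by_contra h
        exact hxs (hzero_out x h)
      exact ⟨by linarith [hx.1], by linarith [hx.2]⟩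
    rw [← intervalIntegral.integral_eq_integral_of_support_subset hsupp]
    exact hFTC2
  -- Fubini equalities
  have fub1 : (∫ q : ℝ × ℝ, F1 q) = ∫ x, ∫ t, F1 (x, t) := by
    rw [hvol]; exact integral_prod F1 intF1'
  have fub2 : (∫ q : ℝ × ℝ, F2 q) = ∫ t, ∫ x, F2 (x, t) := by
    rw [hvol]; exact integral_prod_symm F2 intF2'
  have fubG2a : (∫ q : ℝ × ℝ, G2 q) = ∫ t, ∫ x, G2 (x, t) := by
    rw [hvol]; exact integral_prod_symm G2 intG2'
  have fubG2b : (∫ q : ℝ × ℝ, G2 q) = ∫ x, ∫ t, G2 (x, t) := by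
    rw [hvol]; exact integral_prod G2 intG2'
  -- rewrite the integrand of the goal
  have hgoal : (fun q : ℝ × ℝ => n q.1 q.2 *
      (deriv (fun τ => φ (q.1, τ)) q.2 + D * deriv (deriv (fun y => φ (y, q.2))) q.1))
      = fun q => F1 q + D * F2 q := by
    funext q
    have h1 : deriv (fun τ => φ (q.1, τ)) q.2 = Pt q := by
      rw [hPtdef]; exact (hasDerivAt_comp_snd hφ q.1 q.2).deriv
    have h2 : deriv (fun y => φ (y, q.2)) = fun y => Px (y, q.2) := funext fun y => by
      rw [hPxdef]; exact (hasDerivAt_comp_fst hφ y q.2).deriv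
    have h3 : deriv (deriv (fun y => φ (y, q.2))) q.1 = Pxx q := by
      rw [h2, hPxxdef]; exact (hasDerivAt_comp_fst hPxsm q.1 q.2).deriv
    rw [h1, h3]
    simp only [hF1def, hF2def]
    ring
  rw [hgoal, integral_add intF1 (intF2.const_mul D), integral_const_mul]
  have hIF1 : (∫ q : ℝ × ℝ, F1 q) = -(D * ∫ x, ∫ t, G3 (x, t)) := by
    rw [fub1]
    rw [integral_congr_ae (g := fun x => -(D * ∫ t, G3 (x, t)))
      (by filter_upwards [hae] with x hx using stepT x hx)]
    rw [integral_neg, integral_const_mul]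
  have hIF2 : (∫ q : ℝ × ℝ, F2 q) = -(∫ x, ∫ t, G2 (x, t)) := by
    rw [fub2]
    rw [integral_congr_ae (g := fun t => -(∫ x, G2 (x, t))) (Eventually.of_forall stepX)]
    rw [integral_neg, ← fubG2a, fubG2b]
  rw [hIF1, hIF2]
  have hsum : (∫ x, ∫ t, G3 (x, t)) + (∫ x, ∫ t, G2 (x, t)) = 0 := by
    rw [← integral_add intA intB]; exact hfull
  linear_combination (-D) * hsum
end

section
/- Let D > 0, Δt > 0, and K(ξ, Δt) = (4πDΔt)^{−1/2} exp(−ξ²/(4DΔt)). Let Ω_P = (−∞,0) and Ω_B = (0,∞). Let p : Ω_P → [0,∞) be integrable, let x₁, …, x_m ∈ Ω_B be fixed, and define the measure μ = p(x)·1_{Ω_P}(x) dx + Σ_{i=1}^m δ_{x_i}. Define p̃(x) = ∫_{Ω_P} K(x − x', Δt) p(x') dx' for x ∈ ℝ and α = ∫_0^∞ p̃(x) dx, and assume 0 < α < 1. Perform one step of the PBD algorithm: let ξ be Bernoulli(α); on the event ξ = 1 create one new particle at a random position Y in Ω_B with probability density p₂(x) = p̃(x)/α on (0,∞); independently move each existing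 particle to Z_i = x_i + √(2DΔt) η_i with η_i independent standard normals (independent of ξ and Y). The set of particles in Ω_B after the step is {Y if ξ = 1} ∪ {Z_i : Z_i ∈ Ω_B}. Then for every Borel set A ⊆ Ω_B, the expected number of particles in A after the step equals ∫_A ∫_ℝ K(x − x', Δt) dμ(x') dx = ∫_A [ p̃(x) + Σ_{i=1}^m K(x − x_i, Δt) ] dx. -/
open MeasureTheory ProbabilityTheory Set
open scoped Classical

/-- The Gaussian heat kernel `K(ξ, τ) = (4πDτ)^{-1/2} exp(-ξ²/(4Dτ))`. -/
noncomputable def heatKernel (D ξ τ : ℝ) : ℝ :=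
  (Real.sqrt (4 * Real.pi * D * τ))⁻¹ * Real.exp (-ξ ^ 2 / (4 * D * τ))

/-! Expectation is linear, so the mean number of particles in `A` splits into the creation term
and one term per moved particle. The creation term is `P(ξ = 1, Y ∈ A) = ∫_A p̃` by the joint law
of `(ξ, Y)`. The moved particle `xᵢ + √(2DΔt) ηᵢ` has law `N(xᵢ, 2DΔt)`, whose density is exactly
`K(· - xᵢ, Δt)`. Finally `p̃ = (p 1_{Ω_P}) ⋆ K(·, Δt)` is integrable as the convolution of two
integrable functions. -/

open scoped Convolution

theorem heatKernel_nonneg (D ξ τ : ℝ) : 0 ≤ heatKernel D ξ τ := by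
  unfold heatKernel; positivity

theorem heatKernel_sub_eq_gaussianPDFReal {D τ : ℝ} (hDτ : 0 ≤ D * τ) (x y : ℝ) :
    heatKernel D (x - y) τ = gaussianPDFReal y (2 * D * τ).toNNReal x := by
  rw [gaussianPDFReal, Real.coe_toNNReal _ (by linarith), heatKernel]
  ring_nf

theorem integrable_heatKernel {D τ : ℝ} (hDτ : 0 ≤ D * τ) :
    Integrable (fun ξ ↦ heatKernel D ξ τ) := by
  refine (integrable_gaussianPDFReal 0 (2 * D * τ).toNNReal).congr (ae_of_all _ fun ξ ↦ ?_)
  simpa using (heatKernel_sub_eq_gaussianPDFReal hDτ ξ 0).symm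

theorem integrable_setIntegral_heatKernel_mul {D τ : ℝ} (hDτ : 0 ≤ D * τ) {p : ℝ → ℝ}
    {s : Set ℝ} (hs : MeasurableSet s) (hp : IntegrableOn p s) :
    Integrable (fun x ↦ ∫ y in s, heatKernel D (x - y) τ * p y) := by
  have hconv : (fun x ↦ ∫ y in s, heatKernel D (x - y) τ * p y) =
      s.indicator p ⋆[ContinuousLinearMap.mul ℝ ℝ] (fun ξ ↦ heatKernel D ξ τ) := by
    ext x
    simp_rw [convolution_def, ← integral_indicator hs, indicator_mul_right]
    simp [mul_comm]
  rw [hconv]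
  exact ((integrable_indicator_iff hs).2 hp).integrable_convolution _ (integrable_heatKernel hDτ)

section IteOneZero

variable {Ω : Type*} {q : Ω → Prop} [DecidablePred q]

theorem ite_one_zero_eq_indicator :
    (fun ω ↦ if q ω then (1 : ℝ) else 0) = {ω | q ω}.indicator 1 := by
  ext ω; simp [indicator_apply]

variable [MeasurableSpace Ω] (P : Measure Ω)

theorem integral_ite_one_zero (hq : MeasurableSet {ω | q ω}) :
    ∫ ω, (if q ω then (1 : ℝ) else 0) ∂P = P.real {ω | q ω} := by
  rw [ite_one_zero_eq_indicator, integral_indicator_one hq]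

theorem integrable_ite_one_zero [IsFiniteMeasure P] (hq : MeasurableSet {ω | q ω}) :
    Integrable (fun ω ↦ if q ω then (1 : ℝ) else 0) P := by
  rw [ite_one_zero_eq_indicator]
  exact (integrable_const 1).indicator hq

end IteOneZero

theorem hasLaw_add_sqrt_mul {Ω : Type*} [MeasurableSpace Ω] {P : Measure Ω} {η : Ω → ℝ}
    (hη : HasLaw η (gaussianReal 0 1) P) {D τ : ℝ} (hDτ : 0 ≤ D * τ) (x : ℝ) :
    HasLaw (fun ω ↦ x + Real.sqrt (2 * D * τ) * η ω) (gaussianReal x (2 * D * τ).toNNReal) P := by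
  convert gaussianReal_const_add (gaussianReal_const_mul hη (Real.sqrt (2 * D * τ))) x using 2
  · simp
  · have h2 : (0 : ℝ) ≤ 2 * D * τ := by linarith
    ext; simp [Real.sq_sqrt h2, h2]

theorem integral_ite_add_sqrt_mul_mem {Ω : Type*} [MeasurableSpace Ω] {P : Measure Ω} {η : Ω → ℝ}
    (hη : HasLaw η (gaussianReal 0 1) P) {D τ : ℝ} (hDτ : 0 < D * τ) (x : ℝ) {A : Set ℝ}
    (hA : MeasurableSet A) :
    ∫ ω, (if x + Real.sqrt (2 * D * τ) * η ω ∈ A then (1 : ℝ) else 0) ∂P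
      = ∫ y in A, heatKernel D (y - x) τ := by
  have hv : (2 * D * τ).toNNReal ≠ 0 := by simp; linarith
  rw [← Function.comp_def (fun y ↦ if y ∈ A then (1 : ℝ) else 0),
    (hasLaw_add_sqrt_mul hη hDτ.le x).integral_comp (f := fun y ↦ if y ∈ A then (1 : ℝ) else 0)
      (Measurable.ite hA measurable_const measurable_const).aestronglyMeasurable,
    integral_ite_one_zero (q := (· ∈ A)) _ hA, ofPred_mem_eq, measureReal_def,
    gaussianReal_apply_eq_integral _ hv, ENNReal.toReal_ofReal
      (setIntegral_nonneg hA fun y _ ↦ gaussianPDFReal_nonneg _ _ _)]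
  exact setIntegral_congr_fun hA fun y _ ↦ (heatKernel_sub_eq_gaussianPDFReal hDτ.le y x).symm

theorem pbd_first_algorithm_mean_in_BD_domain_general
    {Ω : Type*} [MeasurableSpace Ω] (P : Measure Ω) [IsProbabilityMeasure P]
    (D Δt : ℝ) (hD : 0 < D) (hΔt : 0 < Δt)
    -- the continuum density on `Ω_P = (−∞, 0)`
    (p : ℝ → ℝ) (hp0 : ∀ x ∈ Iio (0 : ℝ), 0 ≤ p x) (hpint : IntegrableOn p (Iio 0))
    -- the particle positions in `Ω_B = (0, ∞)`
    (m : ℕ) (xs : Fin m → ℝ)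
    -- the diffused continuum density `p̃` and the crossing mass `α`
    (ptilde : ℝ → ℝ)
    (hptilde : ∀ x, ptilde x = ∫ y in Iio (0 : ℝ), heatKernel D (x - y) Δt * p y)
    -- the Bernoulli(α) creation event `ξ` and creation position `Y` with density `p̃/α`
    -- on `Ω_B`, encoded jointly: `P(ξ = 1 ∧ Y ∈ B) = ∫_{B ∩ Ω_B} p̃`
    (ξ : Ω → Bool) (Y : Ω → ℝ) (hξmeas : Measurable ξ) (hYmeas : Measurable Y)
    (hjoint : ∀ B : Set ℝ, MeasurableSet B →
      P {ω | ξ ω = true ∧ Y ω ∈ B} = ENNReal.ofReal (∫ x in B ∩ Ioi (0 : ℝ), ptilde x))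
    -- the independent standard-normal displacements of the existing particles
    (η : Fin m → Ω → ℝ)
    (hηmeas : ∀ i, Measurable (η i))
    (hηlaw : ∀ i, Measure.map (η i) P = gaussianReal 0 1) :
    -- conclusion: expected number of particles in `A ⊆ Ω_B` after the step
    ∀ A : Set ℝ, A ⊆ Ioi (0 : ℝ) → MeasurableSet A →
      ∫ ω, ((if ξ ω = true ∧ Y ω ∈ A then (1 : ℝ) else 0) +
            ∑ i, if xs i + Real.sqrt (2 * D * Δt) * η i ω ∈ A then (1 : ℝ) else 0) ∂P
        = ∫ x in A, (ptilde x + ∑ i, heatKernel D (x - xs i) Δt) := by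
  intro A hA hAm
  have hDΔt : 0 < D * Δt := mul_pos hD hΔt
  have hptilde_int : Integrable ptilde := by
    rw [funext hptilde]
    exact integrable_setIntegral_heatKernel_mul hDΔt.le measurableSet_Iio hpint
  have hptilde_nonneg : ∀ x, 0 ≤ ptilde x := fun x ↦ by
    rw [hptilde]
    exact setIntegral_nonneg measurableSet_Iio fun y hy ↦
      mul_nonneg (heatKernel_nonneg ..) (hp0 y hy)
  have hcreated_meas : MeasurableSet {ω | ξ ω = true ∧ Y ω ∈ A} :=
    (hξmeas (measurableSet_singleton true)).inter (hYmeas hAm)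
  have hmoved_meas : ∀ i, MeasurableSet {ω | xs i + Real.sqrt (2 * D * Δt) * η i ω ∈ A} :=
    fun i ↦ (measurable_const.add (measurable_const.mul (hηmeas i))) hAm
  have hcreated : ∫ ω, (if ξ ω = true ∧ Y ω ∈ A then (1 : ℝ) else 0) ∂P = ∫ x in A, ptilde x := by
    rw [integral_ite_one_zero P hcreated_meas, measureReal_def, hjoint A hAm, inter_eq_left.2 hA,
      ENNReal.toReal_ofReal (setIntegral_nonneg hAm fun x _ ↦ hptilde_nonneg x)]
  have hmoved : ∀ i, ∫ ω, (if xs i + Real.sqrt (2 * D * Δt) * η i ω ∈ A then (1 : ℝ) else 0) ∂P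
      = ∫ x in A, heatKernel D (x - xs i) Δt :=
    fun i ↦ integral_ite_add_sqrt_mul_mem ⟨(hηmeas i).aemeasurable, hηlaw i⟩ hDΔt (xs i) hAm
  have hcreated_int := integrable_ite_one_zero P hcreated_meas
  have hmoved_int := fun i ↦ integrable_ite_one_zero P (hmoved_meas i)
  have hK_int : ∀ i, IntegrableOn (fun x ↦ heatKernel D (x - xs i) Δt) A :=
    fun i ↦ ((integrable_heatKernel hDΔt.le).comp_sub_right (xs i)).integrableOn
  rw [integral_add hcreated_int (integrable_finsetSum _ fun i _ ↦ hmoved_int i),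
    integral_finsetSum _ fun i _ ↦ hmoved_int i,
    integral_add hptilde_int.integrableOn (integrable_finsetSum _ fun i _ ↦ hK_int i),
    integral_finsetSum _ fun i _ ↦ hK_int i, hcreated]
  simp_rw [hmoved]

/-- One step of the first PBD algorithm (A1)–(A5) satisfies Condition (C.1):
with `Ω_P = (−∞,0)`, `Ω_B = (0,∞)`, continuum density `p` on `Ω_P`, particles at
`x₁,…,x_m ∈ Ω_B`, diffused density `p̃ = K(·,Δt) ⋆ (p 1_{Ω_P})`, and `α = ∫_{Ω_B} p̃`,
after one step (create a particle at `Y ∼ p̃/α` on `Ω_B` with probability `α`, and move each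
particle to `Z i = x i + √(2DΔt) η i`), the expected number of particles in any Borel
`A ⊆ Ω_B` equals `∫_A (p̃(x) + Σ_i K(x − x_i, Δt)) dx`, i.e. the heat-kernel evolution of the
combined initial state. -/
theorem pbd_first_algorithm_mean_in_BD_domain
    {Ω : Type*} [MeasurableSpace Ω] (P : Measure Ω) [IsProbabilityMeasure P]
    (D Δt : ℝ) (hD : 0 < D) (hΔt : 0 < Δt)
    -- the continuum density on `Ω_P = (−∞, 0)`
    (p : ℝ → ℝ) (hp0 : ∀ x ∈ Iio (0 : ℝ), 0 ≤ p x) (hpint : IntegrableOn p (Iio 0))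
    -- the particle positions in `Ω_B = (0, ∞)`
    (m : ℕ) (xs : Fin m → ℝ) (hxs : ∀ i, xs i ∈ Ioi (0 : ℝ))
    -- the diffused continuum density `p̃` and the crossing mass `α`
    (ptilde : ℝ → ℝ)
    (hptilde : ∀ x, ptilde x = ∫ y in Iio (0 : ℝ), heatKernel D (x - y) Δt * p y)
    (α : ℝ) (hα : α = ∫ x in Ioi (0 : ℝ), ptilde x) (hα0 : 0 < α) (hα1 : α < 1)
    -- the Bernoulli(α) creation event `ξ` and creation position `Y` with density `p̃/α`
    -- on `Ω_B`, encoded jointly: `P(ξ = 1 ∧ Y ∈ B) = ∫_{B ∩ Ω_B} p̃`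
    (ξ : Ω → Bool) (Y : Ω → ℝ) (hξmeas : Measurable ξ) (hYmeas : Measurable Y)
    (hjoint : ∀ B : Set ℝ, MeasurableSet B →
      P {ω | ξ ω = true ∧ Y ω ∈ B} = ENNReal.ofReal (∫ x in B ∩ Ioi (0 : ℝ), ptilde x))
    -- the independent standard-normal displacements of the existing particles
    (η : Fin m → Ω → ℝ)
    (hηmeas : ∀ i, Measurable (η i))
    (hηlaw : ∀ i, Measure.map (η i) P = gaussianReal 0 1)
    (hηindep : iIndepFun η P)
    -- the displacements are independent of the creation step
    (hindep : IndepFun (fun ω => (ξ ω, Y ω)) (fun ω i => η i ω) P) :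
    -- conclusion: expected number of particles in `A ⊆ Ω_B` after the step
    ∀ A : Set ℝ, A ⊆ Ioi (0 : ℝ) → MeasurableSet A →
      ∫ ω, ((if ξ ω = true ∧ Y ω ∈ A then (1 : ℝ) else 0) +
            ∑ i, if xs i + Real.sqrt (2 * D * Δt) * η i ω ∈ A then (1 : ℝ) else 0) ∂P
        = ∫ x in A, (ptilde x + ∑ i, heatKernel D (x - xs i) Δt) :=
  pbd_first_algorithm_mean_in_BD_domain_general P D Δt hD hΔt p hp0 hpint m xs ptilde hptilde ξ Y
    hξmeas hYmeas hjoint η hηmeas hηlaw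
end
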